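/- With a,b,c,d as in the paper's pair of CZCPs, C(a,d)(τ)+C(b,c)(τ)=0 for all shifts τ with 2^{m−1}−2^{π(m−3)} < τ ≤ 2^{m−1}+1. -/

import Mathlib

/-!
For a shift `τ` in the window the correlation sums run over `i ≤ 2^p`, `p = π(m-3)`, and pair
`I = i + 2^(m-2) - 1 < 2^(m-2) + 2^p` with `J = I + τ ∈ [3·2^(m-2) - 2^p, 3·2^(m-2)]`.
At `I` bit `m-1` is `0` and one of bits `p`, `m-2` is `0`, so `G₁ I = G₂ I`. At `J` bit `m-1` is `1`,
and bit `p` is `1` whenever bit `m-2` is `0` (then `J` lies just below `3·2^(m-2)`), so the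
exponents of `d` and `c` at `J` differ by an odd multiple of `q/2`. As `ω^(q/2) = -1`, every summand
of `C(a,d)(τ) + C(b,c)(τ)` has the form `z·conj(w - w) = 0`.
-/

open Finset Complex

noncomputable def omegaq (q : ℕ) : ℂ := Complex.exp (2 * Real.pi * Complex.I / q)

noncomputable def acorr (N : ℕ) (x y : ℕ → ℂ) (τ : ℕ) : ℂ :=
  ∑ i ∈ Finset.range (N - τ), x i * (starRingEnd ℂ) (y (i + τ))

def bit (i k : ℕ) : ℕ := (i / 2 ^ k) % 2

theorem omegaq_pow_half {q : ℕ} (hq : q ≠ 0) (hq2 : 2 ∣ q) : omegaq q ^ (q / 2) = -1 := by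
  obtain ⟨h, rfl⟩ := hq2
  have hh : (h : ℂ) ≠ 0 := Nat.cast_ne_zero.mpr (by omega)
  rw [omegaq, ← Complex.exp_nat_mul, Nat.mul_div_cancel_left h two_pos, ← Complex.exp_pi_mul_I]
  congr 1
  push_cast
  field_simp

theorem pow_add_mul_add_pow_add_mul_eq_zero {R : Type*} [Ring R] {ζ : R} {n : ℕ}
    (hζ : ζ ^ n = -1) (x : ℕ) {u v : ℕ} (huv : Odd (u + v)) :
    ζ ^ (x + n * u) + ζ ^ (x + n * v) = 0 := by
  simp only [pow_add, pow_mul, hζ]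
  rcases Nat.even_or_odd u with hu | hu
  · rw [hu.neg_one_pow, Odd.neg_one_pow ((Nat.odd_add'.mp huv).mpr hu), mul_one, mul_neg_one,
      add_neg_cancel]
  · rw [hu.neg_one_pow, Even.neg_one_pow ((Nat.odd_add.mp huv).mp hu), mul_one, mul_neg_one,
      neg_add_cancel]

theorem two_pow_mod_two {k : ℕ} (hk : k ≠ 0) : 2 ^ k % 2 = 0 :=
  Nat.mod_eq_zero_of_dvd (dvd_pow_self 2 hk)

namespace bit

theorem le_one (x n : ℕ) : bit x n ≤ 1 := by
  unfold bit
  omega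

theorem eq_mod_two_of_mul_le_of_lt {a x n : ℕ} (h₁ : a * 2 ^ n ≤ x) (h₂ : x < (a + 1) * 2 ^ n) :
    bit x n = a % 2 := by
  rw [bit, Nat.div_eq_of_lt_le h₁ h₂]

theorem eq_zero_of_lt {x n : ℕ} (h : x < 2 ^ n) : bit x n = 0 :=
  eq_mod_two_of_mul_le_of_lt (a := 0) (by omega) (by omega)

variable {p n : ℕ}

theorem succ_eq_zero_and_mul_eq_zero (hp : p < n) {I : ℕ} (h : I < 2 ^ n + 2 ^ p) :
    bit I (n + 1) = 0 ∧ bit I p * bit I n = 0 := by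
  have hpn : 2 ^ p < 2 ^ n := Nat.pow_lt_pow_right one_lt_two hp
  refine ⟨eq_zero_of_lt (by rw [pow_succ]; omega), ?_⟩
  rcases Nat.lt_or_ge I (2 ^ n) with hI | hI
  · rw [eq_zero_of_lt hI, mul_zero]
  · have hbit := eq_mod_two_of_mul_le_of_lt (a := 2 ^ (n - p)) (x := I) (n := p)
      (by rw [pow_sub_mul_pow 2 hp.le]; exact hI)
      (by rw [add_mul, one_mul, pow_sub_mul_pow 2 hp.le]; exact h)
    rw [hbit, two_pow_mod_two (by omega), zero_mul]

theorem succ_eq_one_and_eq_one_of_eq_zero (hp : p < n) {J : ℕ} (h₁ : 3 * 2 ^ n - 2 ^ p ≤ J)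
    (h₂ : J ≤ 3 * 2 ^ n) : bit J (n + 1) = 1 ∧ (bit J n = 0 → bit J p = 1) := by
  have hpn : 2 ^ p < 2 ^ n := Nat.pow_lt_pow_right one_lt_two hp
  refine ⟨eq_mod_two_of_mul_le_of_lt (a := 1) (by rw [pow_succ]; omega)
    (by rw [pow_succ]; omega), fun hJn => ?_⟩
  rcases Nat.lt_or_ge J (3 * 2 ^ n) with hJ | hJ
  · have hpos : 1 ≤ 2 ^ (n - p) := Nat.one_le_two_pow
    have hbit := eq_mod_two_of_mul_le_of_lt (a := 3 * 2 ^ (n - p) - 1) (x := J) (n := p)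
      (by rw [Nat.sub_one_mul, mul_assoc, pow_sub_mul_pow 2 hp.le]; exact h₁)
      (by rw [Nat.sub_add_cancel (by omega), mul_assoc, pow_sub_mul_pow 2 hp.le]; exact hJ)
    have : 2 ^ (n - p) % 2 = 0 := two_pow_mod_two (by omega)
    rw [hbit]
    omega
  · have := eq_mod_two_of_mul_le_of_lt (a := 3) (x := J) (n := n) (by omega) (by omega)
    omega

end bit

theorem odd_mul_one_add_add {u v : ℕ} (hu : u ≤ 1) (hv : v ≤ 1) (h : v = 0 → u = 1) :
    Odd (u * (1 + v) + v) := by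
  interval_cases u <;> interval_cases v <;> simp_all [Nat.odd_iff]

theorem mul_conj_add_mul_conj_eq_zero {ζ : ℂ} {h : ℕ} (hζ : ζ ^ h = -1) (e x : ℕ) {u v : ℕ}
    (huv : Odd (u + v)) :
    ζ ^ e * starRingEnd ℂ (ζ ^ (x + h * u)) + ζ ^ e * starRingEnd ℂ (ζ ^ (x + h * v)) = 0 := by
  rw [← mul_add, ← map_add, pow_add_mul_add_pow_add_mul_eq_zero hζ x huv, map_zero, mul_zero]

theorem cross_summand_eq_zero {ζ : ℂ} {h p n : ℕ} {G G₁ G₂ : ℕ → ℕ} (hζ : ζ ^ h = -1)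
    (hp : p < n) (hG₁ : ∀ i, G₁ i = G i + h * (bit i (n + 1) * bit i n))
    (hG₂ : ∀ i, G₂ i = G i + h * (bit i p * (bit i (n + 1) + bit i n)))
    {I J : ℕ} (hI : I < 2 ^ n + 2 ^ p) (hJ₁ : 3 * 2 ^ n - 2 ^ p ≤ J) (hJ₂ : J ≤ 3 * 2 ^ n) :
    ζ ^ G₁ I * starRingEnd ℂ (ζ ^ (G₂ J + h * bit J n))
      + ζ ^ G₂ I * starRingEnd ℂ (ζ ^ (G₁ J + h * bit J n)) = 0 := by
  obtain ⟨hI_top, hI_mul⟩ := bit.succ_eq_zero_and_mul_eq_zero hp hI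
  obtain ⟨hJ_top, hJ_p⟩ := bit.succ_eq_one_and_eq_one_of_eq_zero hp hJ₁ hJ₂
  have hGI₁ : G₁ I = G I := by rw [hG₁, hI_top, zero_mul, mul_zero, add_zero]
  have hGI₂ : G₂ I = G I := by rw [hG₂, hI_top, zero_add, hI_mul, mul_zero, add_zero]
  have hGJ₁ : G₁ J + h * bit J n = G J + h * bit J n + h * bit J n := by
    rw [hG₁, hJ_top, one_mul]
  have hGJ₂ : G₂ J + h * bit J n = G J + h * bit J n + h * (bit J p * (1 + bit J n)) := by
    rw [hG₂, hJ_top]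
    ring
  rw [hGI₁, hGI₂, hGJ₁, hGJ₂]
  exact mul_conj_add_mul_conj_eq_zero hζ _ _
    (odd_mul_one_add_add (bit.le_one _ _) (bit.le_one _ _) hJ_p)

theorem stmt_8_general (q m : ℕ) (hq : 2 ≤ q) (hq2 : 2 ∣ q) (hm : 4 ≤ m)
    (π : ℕ → ℕ) (hπ : Set.BijOn π (Set.Iio (m - 2)) (Set.Iio (m - 2)))
    (G G₁ G₂ : ℕ → ℕ)
    (hG₁ : ∀ i, G₁ i = G i + q / 2 * (bit i (m - 1) * bit i (m - 2)))
    (hG₂ : ∀ i, G₂ i = G i + q / 2 * (bit i (π (m - 3)) * (bit i (m - 1) + bit i (m - 2))))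
    (a b cs ds : ℕ → ℂ)
    (ha : ∀ i, a i = omegaq q ^ G₁ (i + (2 ^ (m - 2) - 1)))
    (hb : ∀ i, b i = omegaq q ^ G₂ (i + (2 ^ (m - 2) - 1)))
    (hcs : ∀ i, cs i = omegaq q ^ (G₁ (i + (2 ^ (m - 2) - 1))
        + q / 2 * bit (i + (2 ^ (m - 2) - 1)) (m - 2)))
    (hds : ∀ i, ds i = omegaq q ^ (G₂ (i + (2 ^ (m - 2) - 1))
        + q / 2 * bit (i + (2 ^ (m - 2) - 1)) (m - 2))) :
    ∀ τ : ℕ, 2 ^ (m - 1) - 2 ^ π (m - 3) < τ → τ ≤ 2 ^ (m - 1) + 1 →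
      acorr (2 ^ (m - 1) + 2) a ds τ + acorr (2 ^ (m - 1) + 2) b cs τ = 0 := by
  intro τ hτ _
  have hp : π (m - 3) < m - 2 := hπ.mapsTo (show m - 3 < m - 2 by omega)
  have hm1 : m - 1 = m - 2 + 1 := by omega
  have hN : 2 ^ (m - 1) = 2 * 2 ^ (m - 2) := by rw [hm1, pow_succ, mul_comm]
  have hpC : 2 ^ π (m - 3) < 2 ^ (m - 2) := Nat.pow_lt_pow_right one_lt_two hp
  have hpos : 1 ≤ 2 ^ π (m - 3) := Nat.one_le_two_pow
  rw [hN] at hτ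
  rw [acorr, acorr, ← sum_add_distrib]
  refine sum_eq_zero fun i hi => ?_
  rw [mem_range, hN] at hi
  rw [ha, hb, hcs, hds]
  exact cross_summand_eq_zero (omegaq_pow_half (by omega) hq2) hp (by simpa only [hm1] using hG₁)
    (by simpa only [hm1] using hG₂) (by omega) (by omega) (by omega)

/-- Lemma 4, eqn (13): C(a,d)(τ) + C(b,c)(τ) = 0 for all shifts
2^{m−1} − 2^{π(m−3)} < τ ≤ 2^{m−1} + 1. -/
theorem stmt_8 (q m c : ℕ) (hq : 2 ≤ q) (hq2 : 2 ∣ q) (hm : 4 ≤ m)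
    (π : ℕ → ℕ) (hπ : Set.BijOn π (Set.Iio (m - 2)) (Set.Iio (m - 2)))
    (g G G₁ G₂ : ℕ → ℕ)
    (hg : ∀ i, g i = ∑ k ∈ Finset.range (m - 3), bit i (π k) * bit i (π (k + 1)))
    (hG : ∀ i, G i = q / 2 * ((1 - bit i (m - 1)) * bit i (m - 2) * g i
        + bit i (m - 1) * (1 - bit i (m - 2)) * (g i + bit i (π 0) + (m - 2))) + c)
    (hG₁ : ∀ i, G₁ i = G i + q / 2 * (bit i (m - 1) * bit i (m - 2)))
    (hG₂ : ∀ i, G₂ i = G i + q / 2 * (bit i (π (m - 3)) * (bit i (m - 1) + bit i (m - 2))))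
    (a b cs ds : ℕ → ℂ)
    (ha : ∀ i, a i = omegaq q ^ G₁ (i + (2 ^ (m - 2) - 1)))
    (hb : ∀ i, b i = omegaq q ^ G₂ (i + (2 ^ (m - 2) - 1)))
    (hcs : ∀ i, cs i = omegaq q ^ (G₁ (i + (2 ^ (m - 2) - 1))
        + q / 2 * bit (i + (2 ^ (m - 2) - 1)) (m - 2)))
    (hds : ∀ i, ds i = omegaq q ^ (G₂ (i + (2 ^ (m - 2) - 1))
        + q / 2 * bit (i + (2 ^ (m - 2) - 1)) (m - 2))) :
    ∀ τ : ℕ, 2 ^ (m - 1) - 2 ^ π (m - 3) < τ → τ ≤ 2 ^ (m - 1) + 1 →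
      acorr (2 ^ (m - 1) + 2) a ds τ + acorr (2 ^ (m - 1) + 2) b cs τ = 0 :=
  stmt_8_general q m hq hq2 hm π hπ G G₁ G₂ hG₁ hG₂ a b cs ds ha hb hcs hds
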